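/- Let Γ be a colored tree. For every minimally complete subset Y ⊆ E(Γ), the vector v_Y lies in C(Γ) and spans a one-dimensional face of C(Γ); moreover the assignment Y ↦ ℝ_{≥0}·v_Y is a bijection from the set of minimally complete subsets of E(Γ) onto the set of one-dimensional faces of C(Γ). -/

import Mathlib

noncomputable section
open Classical

/-- A rose tree whose leaves ("colored vertices") carry labels of type `α` and whose
internal vertices ("uncolored vertices") are unlabelled. -/
inductive CTree (α : Type) : Type
  | leaf (a : α) : CTree α
  | node (ts : List (CTree α)) : CTree α

namespace CTree

variable {α : Type}

/-- The subtree of `t` at a position `p` (a list of child indices), if it exists. -/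
def sub : CTree α → List ℕ → Option (CTree α)
  | t, [] => some t
  | leaf _, _ :: _ => none
  | node ts, i :: p =>
      match ts[i]? with
      | some c => sub c p
      | none => none

/-- All lists of natural numbers of length at most `k` with entries `< m`. -/
def allLists (m : ℕ) : ℕ → List (List ℕ)
  | 0 => [[]]
  | k + 1 => [] :: (List.range m).flatMap (fun i => (allLists m k).map (i :: ·))

/-- The finite set of positions of vertices of `t`. -/
def vertS (t : CTree α) : Finset (List ℕ) :=
  (allLists (sizeOf t) (sizeOf t)).toFinset.filter (fun p => (t.sub p).isSome)

/-- The finite set of positions of uncolored (internal) vertices of `t`. -/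
def uncS (t : CTree α) : Finset (List ℕ) :=
  (allLists (sizeOf t) (sizeOf t)).toFinset.filter (fun p => ∃ ts, t.sub p = some (node ts))

/-- The finite set of positions of colored vertices (leaves) of `t`. -/
def colS (t : CTree α) : Finset (List ℕ) :=
  (allLists (sizeOf t) (sizeOf t)).toFinset.filter (fun p => ∃ a, t.sub p = some (leaf a))

/-- Edges of `t` are identified with the positions of non-root vertices (an edge joins
the vertex at `p ≠ []` to its parent at `p.dropLast`). -/
def edgeS (t : CTree α) : Finset (List ℕ) := (vertS t).erase []

/-- `t` is a colored tree: every internal vertex has at least one child (so the leaves,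
i.e. the childless vertices, are exactly the colored vertices) and the root is
uncolored. -/
def IsColoredTree (t : CTree α) : Prop :=
  (∀ p, t.sub p ≠ some (node ([] : List (CTree α)))) ∧ ∃ ts, t = node ts

/-- The weight `w_d ∈ M` of an edge `d`: the sum of the dual basis vectors `e_u^*`
over uncolored vertices `u` that are descendants of the upper endpoint of `d` but not
descendants of the lower endpoint of `d`. -/
def wt (t : CTree α) (d : List ℕ) : List ℕ → ℤ := fun u =>
  if u ∈ uncS t ∧ d.dropLast <+: u ∧ ¬ d <+: u then 1 else 0

/-- `s_v ∈ M` : the sum of `e_u^*` over the uncolored descendants `u` of `v`;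
`s(Γ) = sv t []`. -/
def sv (t : CTree α) (v : List ℕ) : List ℕ → ℤ := fun u =>
  if u ∈ uncS t ∧ v <+: u then 1 else 0

/-- The pairing between `M = Hom(ℤ^g, ℤ)` and `ℤ^g` (both realized as integer-valued
functions on the uncolored vertices of `t`). -/
def pairZ (t : CTree α) (μ x : List ℕ → ℤ) : ℤ := ∑ p ∈ uncS t, μ p * x p

/-- The pairing between `M` and `ℝ^g`. -/
def pairR (t : CTree α) (μ : List ℕ → ℤ) (x : List ℕ → ℝ) : ℝ :=
  ∑ p ∈ uncS t, (μ p : ℝ) * x p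

/-- The multiset of edges of the (downward) path from the vertex `v` to the vertex `c`;
each edge occurs with multiplicity one. -/
def pathEdges (t : CTree α) (v c : List ℕ) : Multiset (List ℕ) :=
  ((edgeS t).filter (fun d => v <+: d ∧ d ≠ v ∧ d <+: c)).val

/-- The relation `A ∼ B` on multisets of edges: `A` and `B` consist exactly of the edges
of two non-self-crossing paths from a common vertex to two colored vertices. -/
def Sim (t : CTree α) (A B : Multiset (List ℕ)) : Prop :=
  ∃ v ∈ vertS t, ∃ c₁ ∈ colS t, ∃ c₂ ∈ colS t, v <+: c₁ ∧ v <+: c₂ ∧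
    A = pathEdges t v c₁ ∧ B = pathEdges t v c₂

/-- `Y` is a minimally complete subset of the set of edges of `t`: every
(non-self-crossing) path from the root to a colored vertex contains exactly one edge
of `Y`. -/
def MinComplete (t : CTree α) (Y : Finset (List ℕ)) : Prop :=
  Y ⊆ edgeS t ∧ ∀ c ∈ colS t, ∃! d, d ∈ Y ∧ d <+: c

/-- The finite set of minimally complete subsets of the edge set of `t`. -/
def MCfin (t : CTree α) : Finset (Finset (List ℕ)) :=
  (edgeS t).powerset.filter (fun Y => MinComplete t Y)

/-- The dual cone `C(Γ) = {x ∈ ℝ^g | ⟨w_d, x⟩ ≥ 0 for all edges d}`. -/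
def dualCone (t : CTree α) : Set (List ℕ → ℝ) :=
  {x | (∀ p, p ∉ uncS t → x p = 0) ∧ ∀ d ∈ edgeS t, 0 ≤ pairR t (wt t d) x}

/-- The ray spanned by a vector `v`. -/
def ray (v : List ℕ → ℝ) : Set (List ℕ → ℝ) := {x | ∃ c : ℝ, 0 ≤ c ∧ x = c • v}

/-- `F` is a one-dimensional face (extreme ray) of the convex cone `C`. -/
def IsOneDimFace (C F : Set (List ℕ → ℝ)) : Prop :=
  F ⊆ C ∧ (∃ v, v ≠ 0 ∧ F = ray v) ∧
    ∀ x ∈ C, ∀ y ∈ C, x + y ∈ F → x ∈ F ∧ y ∈ F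

/-- The convex cone generated by a set `G ⊆ ℤ^g` inside `ℝ^g`: all finite nonnegative
real combinations of elements of `G`. -/
def coneHull (G : Set (List ℕ → ℤ)) : Set (List ℕ → ℝ) :=
  {x | ∃ (F : Finset (List ℕ → ℤ)) (c : (List ℕ → ℤ) → ℝ),
    ↑F ⊆ G ∧ (∀ v ∈ F, 0 ≤ c v) ∧
    x = ∑ v ∈ F, c v • (fun p => ((v p : ℤ) : ℝ))}

/-- `e_{v_0} ∈ ℤ^g`: the basis vector of the root vertex. -/
def e0 : List ℕ → ℤ := fun p => if p = [] then 1 else 0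

/-- The inclusion `ℤ^{g_i} → ℤ^g` corresponding to the `i`-th principal subtree. -/
def shift (i : ℕ) (f : List ℕ → ℤ) : List ℕ → ℤ := fun p =>
  match p with
  | [] => 0
  | j :: q => if j = i then f q else 0

def isNodeB : CTree α → Bool
  | leaf _ => false
  | node _ => true

/-- The recursively defined set `G(Γ) ⊆ ℤ^g`: `G(Γ)` consists of all vectors
`e_{v₀} + ∑_{i ∈ J} (w_i - e_{v₀})` where `J` ranges over subsets of the set of indices
of non-trivial principal subtrees and `w_i ∈ G(Γ_i)` (in particular if `g = 1` this is
just `{e_{v₀}}`). -/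
def Gset : CTree α → Set (List ℕ → ℤ)
  | leaf _ => ∅
  | node ts =>
      {v | ∃ (J : Finset (Fin ts.length)) (w : Fin ts.length → (List ℕ → ℤ)),
        (∀ i ∈ J, (ts.get i).isNodeB = true ∧ w i ∈ Gset (ts.get i)) ∧
        v = e0 + ∑ i ∈ J, (shift i.1 (w i) - e0)}
  termination_by t => sizeOf t
  decreasing_by
    have h1 : ts.get i ∈ ts := List.get_mem ts i
    have h2 := List.sizeOf_lt_of_mem h1
    simp only [CTree.node.sizeOf_spec]
    omega

/-- Transport of a set of edges of `Γ` to the `i`-th principal subtree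
(`Y ∩ E(Γ_i)`, rewritten in the coordinates of `Γ_i`). -/
def sect (i : ℕ) (Y : Finset (List ℕ)) : Finset (List ℕ) :=
  (Y.filter (fun p => p.head? = some i)).image List.tail

/-- The recursively defined vector `v_Y ∈ ℤ^g` attached to a (minimally complete) set
of edges `Y`: `v_Y = e_{v₀} + ∑_{i ∈ I} (v_{Y_i} - e_{v₀})` where
`I = {i | d_i ∉ Y}` and `Y_i = Y ∩ E(Γ_i)` (if `g = 1` this is just `e_{v₀}`). -/
def vY : CTree α → Finset (List ℕ) → (List ℕ → ℤ)
  | leaf _, _ => 0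
  | node ts, Y =>
      e0 + ∑ i ∈ Finset.univ.filter (fun i : Fin ts.length => [i.1] ∉ Y),
        (shift i.1 (vY (ts.get i) (sect i.1 Y)) - e0)
  termination_by t => sizeOf t
  decreasing_by
    have h1 : ts.get i ∈ ts := List.get_mem ts i
    have h2 := List.sizeOf_lt_of_mem h1
    simp only [CTree.node.sizeOf_spec]
    omega

/-- The set of balanced labellings `X(Γ) ⊆ ℂ^{E(Γ)}`. -/
def Xbal (t : CTree α) : Set (List ℕ → ℂ) :=
  {x | ∀ v ∈ uncS t, ∀ c ∈ colS t, ∀ c' ∈ colS t, v <+: c → v <+: c' →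
    ((pathEdges t v c).map x).prod = ((pathEdges t v c').map x).prod}

/-- `Y ⊆ E(Γ)` is complete: for every finite multiset `A` of edges, the monomial
`∏_{d ∈ A} x_d` vanishes identically on `{x ∈ X(Γ) | x_y = 0 ∀ y ∈ Y}` if and only if
`A` contains at least one edge belonging to `Y`. -/
def CompleteSet (t : CTree α) (Y : Finset (List ℕ)) : Prop :=
  ∀ A : Multiset (List ℕ), (∀ d ∈ A, d ∈ edgeS t) →
    ((∀ x ∈ Xbal t, (∀ y ∈ Y, x y = 0) → (A.map x).prod = 0) ↔ ∃ d ∈ A, d ∈ Y)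

/-- A partition of a type `I`: a finite collection of nonempty pairwise disjoint
subsets covering `I`. -/
def IsPart {I : Type} (P : Finset (Finset I)) : Prop :=
  (∀ S ∈ P, S ≠ ∅) ∧ ∀ a : I, ∃! S, S ∈ P ∧ a ∈ S

/-- The tree with a single uncolored vertex whose children are the colored vertices
labelled by the elements of `S`. -/
def blockTree {I : Type} (S : Finset I) : CTree I := node (S.toList.map leaf)

/-- The colored tree `Γ_P` of a partition `P`: the root has one child for each block
`S ∈ P`, an uncolored vertex whose children are colored vertices labelled by the
elements of `S`. -/
def gammaP {I : Type} (P : Finset (Finset I)) : CTree I := node (P.toList.map blockTree)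

/-- A tree homomorphism `t → t'`, described by a map `f` on vertex positions: it sends
root to root, vertices to vertices, the two endpoints of any edge to the two endpoints
of an edge, and restricts to a label-preserving bijection between the colored
vertices. -/
def TreeHom {I : Type} (t t' : CTree I) (f : List ℕ → List ℕ) : Prop :=
  f [] = [] ∧
  (∀ p ∈ vertS t, f p ∈ vertS t') ∧
  (∀ p ∈ vertS t, p ≠ [] →
    (f p ≠ [] ∧ (f p).dropLast = f p.dropLast) ∨
    (f p.dropLast ≠ [] ∧ (f p.dropLast).dropLast = f p)) ∧
  (∀ p a, t.sub p = some (leaf a) → t'.sub (f p) = some (leaf a)) ∧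
  Set.BijOn f {p | ∃ a, t.sub p = some (leaf a)} {q | ∃ a, t'.sub q = some (leaf a)}

/-- A partition `P` of the label set is compatible with the colored tree `t` if there
exists a tree homomorphism `t → Γ_P`. -/
def Compatible {I : Type} (t : CTree I) (P : Finset (Finset I)) : Prop :=
  ∃ f, TreeHom t (gammaP P) f

/-- `C_y ⊆ I` : the labels of the colored vertices whose path from the root contains
the edge `y`. -/
def Cy {I : Type} [Fintype I] [DecidableEq I] (t : CTree I) (y : List ℕ) : Finset I :=
  Finset.univ.filter (fun a => ∃ p, t.sub p = some (leaf a) ∧ y <+: p)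

end CTree

/-!
Write `Y_v(x)` for the sum of the coordinates of `x` over the uncolored descendants
of `v`. Then `⟨w_d, x⟩ = Y_{parent d}(x) - Y_d(x)`, and `x ↦ (Y_v(x))_v` is injective on
`ℝ^g`, so in these coordinates `C(Γ)` is the cone of functions that decrease away from the root
and vanish at the colored vertices; in particular they are `≥ 0`. The `Y`-coordinates of `v_Y`
form the indicator of the set `D_Y` of uncolored vertices above `Y`, whence
`⟨w_d, v_Y⟩ = [d ∈ Y]`.

If `x, y ∈ C(Γ)` and `x + y ∈ ℝ_{≥0} v_Y`, then `⟨w_d, x⟩ = ⟨w_d, y⟩ = 0` for `d ∉ Y`, so `Y(x)`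
and `Y(y)` are constant on `D_Y` and zero off it, i.e. multiples of `Y(v_Y)`. Conversely, if `v`
spans an extreme ray, the vertices where `Y(v) > 0` form an ancestor-closed set `D`, the edges
leaving `D` form a minimally complete `Y`, and `⟨w_d, v⟩ > 0` on `Y`. For the least such value
`c`, both `c v_Y` and `v - c v_Y` lie in `C(Γ)`, so extremality puts `c v_Y` on the ray of `v`.
Finally `Y` is recovered from its ray, as the set of edges `d` with `⟨w_d, v_Y⟩ ≠ 0`.
-/

theorem List.IsPrefix.prefix_dropLast {β : Type} {l₁ l₂ : List β} (h : l₁ <+: l₂)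
    (hne : l₁ ≠ l₂) : l₁ <+: l₂.dropLast := by
  have hl₂ : l₂ ≠ [] := by rintro rfl; exact hne (List.prefix_nil.1 h)
  rw [← List.dropLast_append_getLast hl₂, List.prefix_concat_iff,
    List.dropLast_append_getLast hl₂] at h
  exact h.resolve_left hne

namespace CTree

variable {α : Type}

section Positions

@[elab_as_elim]
theorem ind {motive : CTree α → Prop} (leaf : ∀ a, motive (leaf a))
    (node : ∀ ts, (∀ c ∈ ts, motive c) → motive (node ts)) (t : CTree α) : motive t :=
  match t with
  | .leaf a => leaf a
  | .node ts => node ts fun c _ => ind leaf node c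
termination_by sizeOf t
decreasing_by
  have := List.sizeOf_lt_of_mem ‹c ∈ ts›
  simp only [CTree.node.sizeOf_spec]
  omega

theorem one_le_sizeOf (t : CTree α) : 1 ≤ sizeOf t := by
  cases t <;> simp

theorem length_lt_sizeOf (ts : List (CTree α)) : ts.length < sizeOf ts := by
  induction ts with
  | nil => simp
  | cons c ts ih =>
    have := one_le_sizeOf c
    simp only [List.length_cons, List.cons.sizeOf_spec]
    omega

theorem sub_nil (t : CTree α) : sub t [] = some t := by
  cases t <;> rfl

theorem sub_node_cons (ts : List (CTree α)) (j : ℕ) (q : List ℕ) :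
    sub (node ts) (j :: q) = ts[j]?.bind (sub · q) := by
  cases h : ts[j]? <;> simp [sub, h]

theorem sub_append (t : CTree α) (p q : List ℕ) :
    sub t (p ++ q) = (sub t p).bind (sub · q) := by
  induction p generalizing t with
  | nil => simp [sub_nil]
  | cons i p ih =>
    cases t with
    | leaf a => simp [sub]
    | node ts => cases h : ts[i]? <;> simp [sub_node_cons, h, ih]

theorem sub_leaf_append_ne_nil {t : CTree α} {p q : List ℕ} {a : α}
    (hp : sub t p = some (leaf a)) (hq : q ≠ []) : sub t (p ++ q) = none := by
  obtain ⟨j, q, rfl⟩ := List.exists_cons_of_ne_nil hq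
  simp [sub_append, hp, sub]

theorem sub_bound {p : List ℕ} {t s : CTree α} (h : sub t p = some s) :
    p.length + sizeOf s ≤ sizeOf t ∧ ∀ j ∈ p, j < sizeOf t := by
  induction p generalizing t with
  | nil => simp_all [sub_nil]
  | cons i q ih =>
    cases t with
    | leaf a => simp [sub] at h
    | node ts =>
      rw [sub_node_cons] at h
      obtain ⟨c, hc, hcq⟩ := Option.bind_eq_some_iff.1 h
      obtain ⟨hlen, hent⟩ := ih hcq
      have hcs := List.sizeOf_lt_of_mem (List.mem_of_getElem? hc)
      have hi := (List.getElem?_eq_some_iff.1 hc).1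
      have := length_lt_sizeOf ts
      simp only [List.length_cons, List.forall_mem_cons, node.sizeOf_spec]
      exact ⟨by omega, by omega, fun j hj => by have := hent j hj; omega⟩

theorem mem_allLists {m k : ℕ} {p : List ℕ} :
    p ∈ allLists m k ↔ p.length ≤ k ∧ ∀ j ∈ p, j < m := by
  induction k generalizing p with
  | zero => cases p <;> simp [allLists]
  | succ k ih =>
    cases p with
    | nil => simp [allLists]
    | cons i q => simp [allLists, ih, and_left_comm]

theorem mem_allLists_of_sub {t s : CTree α} {p : List ℕ} (h : sub t p = some s) :
    p ∈ (allLists (sizeOf t) (sizeOf t)).toFinset := by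
  obtain ⟨hlen, hent⟩ := sub_bound h
  have := one_le_sizeOf s
  exact List.mem_toFinset.2 (mem_allLists.2 ⟨by omega, hent⟩)

theorem mem_vertS {t : CTree α} {p : List ℕ} : p ∈ vertS t ↔ (sub t p).isSome := by
  refine ⟨fun h => (Finset.mem_filter.1 h).2, fun h => Finset.mem_filter.2 ⟨?_, h⟩⟩
  obtain ⟨s, hs⟩ := Option.isSome_iff_exists.1 h
  exact mem_allLists_of_sub hs

theorem mem_uncS {t : CTree α} {p : List ℕ} : p ∈ uncS t ↔ ∃ ts, sub t p = some (node ts) :=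
  ⟨fun h => (Finset.mem_filter.1 h).2,
    fun ⟨_, hs⟩ => Finset.mem_filter.2 ⟨mem_allLists_of_sub hs, _, hs⟩⟩

theorem mem_colS {t : CTree α} {p : List ℕ} : p ∈ colS t ↔ ∃ a, sub t p = some (leaf a) :=
  ⟨fun h => (Finset.mem_filter.1 h).2,
    fun ⟨_, hs⟩ => Finset.mem_filter.2 ⟨mem_allLists_of_sub hs, _, hs⟩⟩

theorem mem_edgeS {t : CTree α} {p : List ℕ} : p ∈ edgeS t ↔ p ≠ [] ∧ p ∈ vertS t :=
  Finset.mem_erase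

theorem mem_vertS_iff {t : CTree α} {p : List ℕ} : p ∈ vertS t ↔ p ∈ uncS t ∨ p ∈ colS t := by
  rw [mem_vertS, mem_uncS, mem_colS]
  rcases sub t p with _ | _ | _ <;> simp

theorem mem_vertS_of_mem_uncS {t : CTree α} {p : List ℕ} (h : p ∈ uncS t) : p ∈ vertS t :=
  mem_vertS_iff.2 (Or.inl h)

theorem mem_vertS_of_mem_colS {t : CTree α} {p : List ℕ} (h : p ∈ colS t) : p ∈ vertS t :=
  mem_vertS_iff.2 (Or.inr h)

theorem notMem_uncS_of_mem_colS {t : CTree α} {p : List ℕ} (h : p ∈ colS t) : p ∉ uncS t := by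
  obtain ⟨a, ha⟩ := mem_colS.1 h
  simp [mem_uncS, ha]

theorem mem_vertS_of_prefix {t : CTree α} {p q : List ℕ} (hqp : q <+: p) (hp : p ∈ vertS t) :
    q ∈ vertS t := by
  obtain ⟨r, rfl⟩ := hqp
  rw [mem_vertS, sub_append] at hp
  rw [mem_vertS]
  cases h : sub t q <;> simp_all

theorem mem_uncS_of_prefix_of_ne {t : CTree α} {p q : List ℕ} (hqp : q <+: p) (hne : q ≠ p)
    (hp : p ∈ vertS t) : q ∈ uncS t := by
  refine (mem_vertS_iff.1 (mem_vertS_of_prefix hqp hp)).resolve_right fun hq => ?_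
  obtain ⟨r, rfl⟩ := hqp
  obtain ⟨a, ha⟩ := mem_colS.1 hq
  rw [mem_vertS, sub_leaf_append_ne_nil ha (by simpa using hne)] at hp
  exact absurd hp (by simp)

theorem mem_uncS_of_prefix {t : CTree α} {p q : List ℕ} (hqp : q <+: p) (hp : p ∈ uncS t) :
    q ∈ uncS t := by
  by_cases hne : q = p
  · exact hne ▸ hp
  · exact mem_uncS_of_prefix_of_ne hqp hne (mem_vertS_of_mem_uncS hp)

theorem dropLast_mem_uncS {t : CTree α} {p : List ℕ} (hp : p ∈ edgeS t) :
    p.dropLast ∈ uncS t := by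
  obtain ⟨hne, hp⟩ := mem_edgeS.1 hp
  refine mem_uncS_of_prefix_of_ne (List.dropLast_prefix p) (fun h => ?_) hp
  have := congrArg List.length h
  simp only [List.length_dropLast] at this
  have := List.length_pos_iff.2 hne
  omega

theorem take_succ_mem_edgeS {t : CTree α} {p : List ℕ} (hp : p ∈ vertS t) {m : ℕ}
    (hm : m < p.length) : p.take (m + 1) ∈ edgeS t :=
  mem_edgeS.2 ⟨fun h => by rcases List.take_eq_nil_iff.1 h with h | rfl <;> simp_all,
    mem_vertS_of_prefix (List.take_prefix _ _) hp⟩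

theorem exists_sub_eq_leaf {s : CTree α}
    (hs : ∀ q, sub s q ≠ some (node [])) : ∃ r a, sub s r = some (leaf a) := by
  induction s using ind with
  | leaf a => exact ⟨[], a, rfl⟩
  | node ts ih =>
    obtain ⟨c, ts', rfl⟩ : ∃ c ts', ts = c :: ts' :=
      List.exists_cons_of_ne_nil fun h => hs [] (by rw [h]; rfl)
    obtain ⟨r, a, hr⟩ := ih c (by simp) fun q hq => hs (0 :: q) (by simpa [sub_node_cons])
    exact ⟨0 :: r, a, by simpa [sub_node_cons]⟩

theorem IsColoredTree.exists_mem_colS {t : CTree α} (ht : t.IsColoredTree) {p : List ℕ}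
    (hp : p ∈ vertS t) : ∃ c ∈ colS t, p <+: c := by
  obtain ⟨s, hs⟩ := Option.isSome_iff_exists.1 (mem_vertS.1 hp)
  obtain ⟨r, a, hr⟩ := exists_sub_eq_leaf (s := s) fun q hq =>
    ht.1 (p ++ q) (by simp [sub_append, hs, hq])
  exact ⟨p ++ r, mem_colS.2 ⟨a, by simp [sub_append, hs, hr]⟩, List.prefix_append p r⟩

theorem IsColoredTree.nil_mem_uncS {t : CTree α} (ht : t.IsColoredTree) : [] ∈ uncS t := by
  obtain ⟨ts, rfl⟩ := ht.2
  exact mem_uncS.2 ⟨ts, rfl⟩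

theorem length_lt_sizeOf_of_mem_vertS {t : CTree α} {p : List ℕ} (hp : p ∈ vertS t) :
    p.length < sizeOf t := by
  obtain ⟨s, hs⟩ := Option.isSome_iff_exists.1 (mem_vertS.1 hp)
  have := one_le_sizeOf s
  have := (sub_bound hs).1
  omega

theorem lt_sizeOf_of_mem_vertS {t : CTree α} {p : List ℕ} (hp : p ∈ vertS t) {j : ℕ}
    (hj : j ∈ p) : j < sizeOf t := by
  obtain ⟨s, hs⟩ := Option.isSome_iff_exists.1 (mem_vertS.1 hp)
  exact (sub_bound hs).2 j hj

end Positions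

section DescSum

def descSum (t : CTree α) (v : List ℕ) : (List ℕ → ℝ) →ₗ[ℝ] ℝ :=
  ∑ u ∈ (uncS t).filter (v <+: ·), LinearMap.proj u

theorem descSum_apply (t : CTree α) (v : List ℕ) (x : List ℕ → ℝ) :
    descSum t v x = ∑ u ∈ (uncS t).filter (v <+: ·), x u := by
  simp [descSum]

theorem descSum_eq_zero_of_notMem_uncS {t : CTree α} {v : List ℕ} (hv : v ∉ uncS t)
    (x : List ℕ → ℝ) : descSum t v x = 0 := by
  rw [descSum_apply]
  refine Finset.sum_eq_zero fun u hu => absurd ?_ hv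
  exact mem_uncS_of_prefix (Finset.mem_filter.1 hu).2 (Finset.mem_filter.1 hu).1

theorem pairR_wt (t : CTree α) (d : List ℕ) (x : List ℕ → ℝ) :
    pairR t (wt t d) x = descSum t d.dropLast x - descSum t d x := by
  simp only [pairR, descSum_apply, Finset.sum_filter, ← Finset.sum_sub_distrib]
  refine Finset.sum_congr rfl fun u hu => ?_
  have : d <+: u → d.dropLast <+: u := (List.dropLast_prefix d).trans
  by_cases h : d <+: u <;> by_cases h' : d.dropLast <+: u <;> simp_all [wt]

theorem descSum_sub_descSum_of_prefix (t : CTree α) (x : List ℕ → ℝ) {q v : List ℕ}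
    (hqv : q <+: v) : descSum t q x - descSum t v x =
      ∑ m ∈ Finset.Ico q.length v.length, pairR t (wt t (v.take (m + 1))) x := by
  have hgap : ∀ m ∈ Finset.Ico q.length v.length, pairR t (wt t (v.take (m + 1))) x =
      -(descSum t (v.take (m + 1)) x - descSum t (v.take m) x) := by
    intro m hm
    have hm : m < v.length := (Finset.mem_Ico.1 hm).2
    have : (v.take (m + 1)).dropLast = v.take m := by
      simp [List.dropLast_eq_take, List.take_take]; omega
    rw [pairR_wt, this, neg_sub]
  rw [Finset.sum_congr rfl hgap, Finset.sum_neg_distrib,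
    Finset.sum_Ico_sub (fun m => descSum t (v.take m) x) hqv.length_le, List.take_length,
    ← List.prefix_iff_eq_take.1 hqv, neg_sub]

theorem eq_zero_of_descSum_eq_zero {t : CTree α} {x : List ℕ → ℝ}
    (hx : ∀ p ∉ uncS t, x p = 0) (h : ∀ v ∈ uncS t, descSum t v x = 0) : x = 0 := by
  funext v
  induction hn : sizeOf t - v.length using Nat.strong_induction_on generalizing v with
  | _ n ih =>
    by_cases hv : v ∈ uncS t
    · have hvA : v ∈ (uncS t).filter (v <+: ·) := Finset.mem_filter.2 ⟨hv, List.prefix_refl v⟩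
      have hsum := h v hv
      rw [descSum_apply, ← Finset.add_sum_erase _ _ hvA] at hsum
      have hv' := length_lt_sizeOf_of_mem_vertS (mem_vertS_of_mem_uncS hv)
      have hrest : ∑ u ∈ ((uncS t).filter (v <+: ·)).erase v, x u = 0 := by
        refine Finset.sum_eq_zero fun u hu => ?_
        obtain ⟨hne, hu⟩ := Finset.mem_erase.1 hu
        obtain ⟨-, hvu⟩ := Finset.mem_filter.1 hu
        have : v.length < u.length :=
          lt_of_le_of_ne hvu.length_le fun hl => hne (hvu.eq_of_length_le hl.ge).symm
        exact ih _ (by omega) u rfl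
      simpa [hrest] using hsum
    · exact hx v hv

theorem descSum_sub_sum_children {t : CTree α} {χ : List ℕ → ℝ} (hχ : ∀ p ∉ uncS t, χ p = 0)
    {N : ℕ} (hN : sizeOf t ≤ N) {v : List ℕ} (hv : v ∈ uncS t) :
    descSum t v (fun u => χ u - ∑ i ∈ Finset.range N, χ (u ++ [i])) = χ v := by
  set A := (uncS t).filter (v <+: ·)
  have hvA : v ∈ A := Finset.mem_filter.2 ⟨hv, List.prefix_refl v⟩
  have hchildren : ∑ u ∈ A, ∑ i ∈ Finset.range N, χ (u ++ [i]) = ∑ w ∈ A.erase v, χ w := by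
    rw [← Finset.sum_product' (f := fun u i => χ (u ++ [i])),
      ← Finset.sum_image (g := fun p : List ℕ × ℕ => p.1 ++ [p.2]) (f := χ)
        fun p _ q _ h => Prod.ext_iff.2 (by simpa using List.append_inj' h rfl)]
    refine (Finset.sum_subset (fun w hw => ?_) fun w hw hw' => hχ w fun hwu => hw' ?_).symm
    · obtain ⟨hwv, hw⟩ := Finset.mem_erase.1 hw
      obtain ⟨hwu, hvw⟩ := Finset.mem_filter.1 hw
      have hw0 : w ≠ [] := by rintro rfl; exact hwv (List.prefix_nil.1 hvw).symm
      have hwe : w ∈ edgeS t := mem_edgeS.2 ⟨hw0, mem_vertS_of_mem_uncS hwu⟩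
      refine Finset.mem_image.2 ⟨(w.dropLast, w.getLast hw0), Finset.mem_product.2 ⟨?_, ?_⟩,
        List.dropLast_append_getLast hw0⟩
      · refine Finset.mem_filter.2 ⟨dropLast_mem_uncS hwe, ?_⟩
        exact hvw.prefix_dropLast (Ne.symm hwv)
      · exact Finset.mem_range.2 ((lt_sizeOf_of_mem_vertS (mem_vertS_of_mem_uncS hwu)
          (List.getLast_mem hw0)).trans_le hN)
    · obtain ⟨⟨u, i⟩, hp, rfl⟩ := Finset.mem_image.1 hw
      obtain ⟨hu, -⟩ := Finset.mem_product.1 hp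
      have hvu := (Finset.mem_filter.1 hu).2
      refine Finset.mem_erase.2 ⟨fun h => ?_,
        Finset.mem_filter.2 ⟨hwu, hvu.trans (List.prefix_append _ _)⟩⟩
      have := congrArg List.length h
      have := hvu.length_le
      simp only [List.length_append, List.length_singleton] at *
      omega
  rw [descSum_apply, Finset.sum_sub_distrib, hchildren, ← Finset.add_sum_erase A χ hvA]
  ring

theorem pairR_add (t : CTree α) (μ : List ℕ → ℤ) (x y : List ℕ → ℝ) :
    pairR t μ (x + y) = pairR t μ x + pairR t μ y := by
  simp [pairR, mul_add, Finset.sum_add_distrib]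

theorem pairR_sub (t : CTree α) (μ : List ℕ → ℤ) (x y : List ℕ → ℝ) :
    pairR t μ (x - y) = pairR t μ x - pairR t μ y := by
  simp [pairR, mul_sub, Finset.sum_sub_distrib]

theorem pairR_smul (t : CTree α) (μ : List ℕ → ℤ) (c : ℝ) (x : List ℕ → ℝ) :
    pairR t μ (c • x) = c * pairR t μ x := by
  simp [pairR, Finset.mul_sum, mul_left_comm]

end DescSum

section DualCone

theorem mem_dualCone {t : CTree α} {x : List ℕ → ℝ} :
    x ∈ dualCone t ↔
      (∀ p ∉ uncS t, x p = 0) ∧ ∀ d ∈ edgeS t, descSum t d x ≤ descSum t d.dropLast x := by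
  simp only [dualCone, Set.mem_ofPred_eq, pairR_wt, sub_nonneg]

theorem smul_mem_dualCone {t : CTree α} {c : ℝ} (hc : 0 ≤ c) {x : List ℕ → ℝ}
    (hx : x ∈ dualCone t) : c • x ∈ dualCone t := by
  rw [mem_dualCone] at hx ⊢
  refine ⟨fun p hp => by simp [hx.1 p hp], fun d hd => ?_⟩
  simpa only [map_smul, smul_eq_mul] using mul_le_mul_of_nonneg_left (hx.2 d hd) hc

theorem descSum_le_of_prefix {t : CTree α} {x : List ℕ → ℝ} (hx : x ∈ dualCone t)
    {q v : List ℕ} (hv : v ∈ vertS t) (hqv : q <+: v) : descSum t v x ≤ descSum t q x := by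
  have hgaps := descSum_sub_descSum_of_prefix t x hqv
  have : 0 ≤ ∑ m ∈ Finset.Ico q.length v.length, pairR t (wt t (v.take (m + 1))) x :=
    Finset.sum_nonneg fun m hm => hx.2 _ (take_succ_mem_edgeS hv (Finset.mem_Ico.1 hm).2)
  linarith

theorem IsColoredTree.descSum_nonneg {t : CTree α} (ht : t.IsColoredTree) {x : List ℕ → ℝ}
    (hx : x ∈ dualCone t) {v : List ℕ} (hv : v ∈ vertS t) : 0 ≤ descSum t v x := by
  obtain ⟨c, hc, hvc⟩ := ht.exists_mem_colS hv
  rw [← descSum_eq_zero_of_notMem_uncS (notMem_uncS_of_mem_colS hc) x]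
  exact descSum_le_of_prefix hx (mem_vertS_of_mem_colS hc) hvc

end DualCone

section MinComplete

theorem MinComplete.nil_notMem {t : CTree α} {Y : Finset (List ℕ)} (hY : t.MinComplete Y) :
    [] ∉ Y :=
  fun h => (mem_edgeS.1 (hY.1 h)).1 rfl

theorem MinComplete.eq_of_prefix {t : CTree α} (ht : t.IsColoredTree) {Y : Finset (List ℕ)}
    (hY : t.MinComplete Y) {d d' : List ℕ} (hd : d ∈ Y) (hd' : d' ∈ Y) (h : d' <+: d) :
    d' = d := by
  obtain ⟨c, hc, hdc⟩ := ht.exists_mem_colS (mem_edgeS.1 (hY.1 hd)).2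
  exact (hY.2 c hc).unique ⟨hd', h.trans hdc⟩ ⟨hd, hdc⟩

theorem MinComplete.nonempty {t : CTree α} (ht : t.IsColoredTree) {Y : Finset (List ℕ)}
    (hY : t.MinComplete Y) : Y.Nonempty := by
  obtain ⟨c, hc, -⟩ := ht.exists_mem_colS (mem_vertS_of_mem_uncS ht.nil_mem_uncS)
  obtain ⟨d, ⟨hd, -⟩, -⟩ := hY.2 c hc
  exact ⟨d, hd⟩

def exitEdges (t : CTree α) (D : Set (List ℕ)) : Finset (List ℕ) :=
  (edgeS t).filter fun d => d.dropLast ∈ D ∧ d ∉ D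

theorem eq_of_mem_exitEdges_of_prefix {t : CTree α} {D : Set (List ℕ)}
    (hpre : ∀ v ∈ D, ∀ q, q <+: v → q ∈ D) {e e' : List ℕ} (he : e ∈ exitEdges t D)
    (he' : e' ∈ exitEdges t D) (h : e <+: e') : e = e' := by
  by_contra hne
  exact (Finset.mem_filter.1 he).2.2
    (hpre _ (Finset.mem_filter.1 he').2.1 e (h.prefix_dropLast hne))

theorem exists_mem_exitEdges_prefix {t : CTree α} {D : Set (List ℕ)} (hroot : [] ∈ D)
    {w : List ℕ} (hw : w ∈ vertS t) (hwD : w ∉ D) : ∃ e ∈ exitEdges t D, e <+: w := by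
  induction w using List.reverseRecOn with
  | nil => exact absurd hroot hwD
  | append_singleton u a ih =>
    by_cases hu : u ∈ D
    · refine ⟨u ++ [a], Finset.mem_filter.2 ⟨mem_edgeS.2 ⟨by simp, hw⟩, ?_, hwD⟩,
        List.prefix_refl _⟩
      rwa [List.dropLast_concat]
    · obtain ⟨e, he, heu⟩ := ih (mem_vertS_of_prefix (List.prefix_append u [a]) hw) hu
      exact ⟨e, he, heu.trans (List.prefix_append u [a])⟩

theorem minComplete_exitEdges {t : CTree α} {D : Set (List ℕ)}
    (hpre : ∀ v ∈ D, ∀ q, q <+: v → q ∈ D) (hroot : [] ∈ D) (hD : D ⊆ uncS t) :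
    t.MinComplete (exitEdges t D) := by
  refine ⟨Finset.filter_subset _ _, fun c hc => ?_⟩
  obtain ⟨e, he, hec⟩ := exists_mem_exitEdges_prefix hroot (mem_vertS_of_mem_colS hc)
    fun h => notMem_uncS_of_mem_colS hc (hD h)
  refine ⟨e, ⟨he, hec⟩, fun e' ⟨he', he'c⟩ => ?_⟩
  rcases List.prefix_or_prefix_of_prefix hec he'c with h | h
  · exact (eq_of_mem_exitEdges_of_prefix hpre he he' h).symm
  · exact eq_of_mem_exitEdges_of_prefix hpre he' he h

end MinComplete

section Children

variable {ts : List (CTree α)} {j : ℕ} {c : CTree α}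

theorem sizeOf_lt_of_getElem? (hc : ts[j]? = some c) : sizeOf c < sizeOf (node ts) := by
  have := List.sizeOf_lt_of_mem (List.mem_of_getElem? hc)
  simp only [node.sizeOf_spec]
  omega

theorem mem_vertS_node_cons (hc : ts[j]? = some c) {q : List ℕ} :
    j :: q ∈ vertS (node ts) ↔ q ∈ vertS c := by
  simp [mem_vertS, sub_node_cons, hc]

theorem mem_uncS_node_cons (hc : ts[j]? = some c) {q : List ℕ} :
    j :: q ∈ uncS (node ts) ↔ q ∈ uncS c := by
  simp [mem_uncS, sub_node_cons, hc]

theorem mem_colS_node_cons (hc : ts[j]? = some c) {q : List ℕ} :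
    j :: q ∈ colS (node ts) ↔ q ∈ colS c := by
  simp [mem_colS, sub_node_cons, hc]

theorem notMem_uncS_node_cons (hj : ts[j]? = none) (q : List ℕ) :
    j :: q ∉ uncS (node ts) := by
  simp [mem_uncS, sub_node_cons, hj]

theorem mem_sect {Y : Finset (List ℕ)} {q : List ℕ} : q ∈ sect j Y ↔ j :: q ∈ Y := by
  simp only [sect, Finset.mem_image, Finset.mem_filter]
  constructor
  · rintro ⟨_ | ⟨i, p⟩, ⟨hp, hi⟩, rfl⟩
    · simp at hi
    · simp_all
  · exact fun h => ⟨j :: q, ⟨h, rfl⟩, rfl⟩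

variable {Y : Finset (List ℕ)}

theorem MinComplete.singleton_mem_of_leaf (hY : (node ts).MinComplete Y) {a : α}
    (hc : ts[j]? = some (leaf a)) : [j] ∈ Y := by
  obtain ⟨d, ⟨hd, hdj⟩, -⟩ := hY.2 [j] (mem_colS.2 ⟨a, by simp [sub_node_cons, hc, sub_nil]⟩)
  rcases List.prefix_cons_iff.1 hdj with rfl | ⟨_, rfl, h⟩
  · exact absurd hd hY.nil_notMem
  · rwa [List.prefix_nil.1 h] at hd

theorem MinComplete.sect (hY : (node ts).MinComplete Y) (hc : ts[j]? = some c) (hjY : [j] ∉ Y) :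
    c.MinComplete (sect j Y) := by
  refine ⟨fun d hd => ?_, fun cc hcc => ?_⟩
  · have hd := mem_sect.1 hd
    obtain ⟨-, hdv⟩ := mem_edgeS.1 (hY.1 hd)
    exact mem_edgeS.2 ⟨by rintro rfl; exact hjY hd, (mem_vertS_node_cons hc).1 hdv⟩
  · obtain ⟨d, ⟨hd, hdc⟩, huniq⟩ := hY.2 (j :: cc) ((mem_colS_node_cons hc).2 hcc)
    rcases d with _ | ⟨i, d⟩
    · exact absurd hd hY.nil_notMem
    obtain ⟨rfl, hdcc⟩ := List.cons_prefix_cons.1 hdc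
    refine ⟨d, ⟨mem_sect.2 hd, hdcc⟩, fun e ⟨he, hec⟩ => ?_⟩
    simpa using huniq (i :: e) ⟨mem_sect.1 he, List.cons_prefix_cons.2 ⟨rfl, hec⟩⟩

theorem IsColoredTree.child (ht : (node ts).IsColoredTree) (hY : (node ts).MinComplete Y)
    (hc : ts[j]? = some c) (hjY : [j] ∉ Y) : c.IsColoredTree := by
  refine ⟨fun q hq => ht.1 (j :: q) (by simpa [sub_node_cons, hc]), ?_⟩
  cases c with
  | leaf a => exact absurd (hY.singleton_mem_of_leaf hc) hjY
  | node ts' => exact ⟨ts', rfl⟩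

end Children

section VY

variable {t : CTree α} {Y : Finset (List ℕ)}

theorem vY_node_nil (ts : List (CTree α)) :
    vY (node ts) Y [] = 1 - (Finset.univ.filter fun i : Fin ts.length => [i.1] ∉ Y).card := by
  rw [vY, Pi.add_apply, Finset.sum_apply]
  simp [shift, e0, sub_eq_add_neg]

theorem vY_node_cons {ts : List (CTree α)} {j : ℕ} {c : CTree α} (hc : ts[j]? = some c)
    (hjY : [j] ∉ Y) (q : List ℕ) :
    vY (node ts) Y (j :: q) = vY c (sect j Y) q := by
  obtain ⟨hj, rfl⟩ := List.getElem?_eq_some_iff.1 hc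
  rw [vY, Pi.add_apply, Finset.sum_apply,
    Finset.sum_eq_single_of_mem ⟨j, hj⟩ (by simpa using hjY)]
  · simp [shift, e0]
  · intro i _ hi
    have : j ≠ i.1 := fun h => hi (Fin.ext h.symm)
    simp [shift, e0, this]

theorem vY_node_cons_eq_zero {ts : List (CTree α)} {j : ℕ}
    (h : ts[j]? = none ∨ [j] ∈ Y) (q : List ℕ) : vY (node ts) Y (j :: q) = 0 := by
  rw [vY, Pi.add_apply, Finset.sum_apply, Finset.sum_eq_zero fun i hi => ?_]
  · simp [e0]
  · have : j ≠ i.1 := by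
      rintro rfl
      rcases h with h | h
      · simp at h
      · simp_all
    simp [shift, e0, this]

def chiY (t : CTree α) (Y : Finset (List ℕ)) (v : List ℕ) : ℤ :=
  if v ∈ uncS t ∧ ∀ d ∈ Y, ¬ d <+: v then 1 else 0

theorem chiY_eq_zero_of_notMem_uncS {v : List ℕ} (hv : v ∉ uncS t) : chiY t Y v = 0 :=
  if_neg fun h => hv h.1

theorem chiY_eq_zero_of_prefix {d v : List ℕ} (hd : d ∈ Y) (hdv : d <+: v) : chiY t Y v = 0 :=
  if_neg fun h => h.2 d hd hdv

theorem chiY_nil (hroot : [] ∈ uncS t) (hY : [] ∉ Y) : chiY t Y [] = 1 :=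
  if_pos ⟨hroot, fun _ hd h => hY (List.prefix_nil.1 h ▸ hd)⟩

theorem chiY_node_cons {ts : List (CTree α)} {j : ℕ} {c : CTree α} (hY : [] ∉ Y)
    (hc : ts[j]? = some c) (r : List ℕ) :
    chiY (node ts) Y (j :: r) = chiY c (sect j Y) r := by
  refine if_congr (and_congr (mem_uncS_node_cons hc) ⟨fun h d hd hdr => ?_, fun h => ?_⟩) rfl rfl
  · exact h _ (mem_sect.1 hd) (List.cons_prefix_cons.2 ⟨rfl, hdr⟩)
  · rintro (_ | ⟨i, d⟩) hd hdr
    · exact hY hd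
    · obtain ⟨rfl, hdr'⟩ := List.cons_prefix_cons.1 hdr
      exact h d (mem_sect.2 hd) hdr'

theorem sum_chiY_singleton {ts : List (CTree α)} (ht : (node ts).IsColoredTree)
    (hY : (node ts).MinComplete Y) {N : ℕ} (hN : ts.length ≤ N) :
    ∑ i ∈ Finset.range N, chiY (node ts) Y [i] =
      (Finset.univ.filter fun i : Fin ts.length => [i.1] ∉ Y).card := by
  have hchild : ∀ i ∈ Finset.range ts.length,
      chiY (node ts) Y [i] = ((if [i] ∉ Y then 1 else 0 : ℕ) : ℤ) := by
    intro i hi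
    have hc := List.getElem?_eq_getElem (Finset.mem_range.1 hi)
    by_cases hiY : [i] ∈ Y
    · simp [hiY, chiY_eq_zero_of_prefix hiY (List.prefix_refl _)]
    · rw [chiY_node_cons hY.nil_notMem hc, chiY_nil (ht.child hY hc hiY).nil_mem_uncS
        (hY.sect hc hiY).nil_notMem]
      simp [hiY]
  have hnone : ∀ i ∈ Finset.Ico ts.length N, chiY (node ts) Y [i] = 0 := fun i hi =>
    chiY_eq_zero_of_notMem_uncS
      (notMem_uncS_node_cons (List.getElem?_eq_none (Finset.mem_Ico.1 hi).1) [])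
  rw [Finset.card_filter, Nat.cast_sum,
    Fin.sum_univ_eq_sum_range (fun i => ((if [i] ∉ Y then 1 else 0 : ℕ) : ℤ)),
    ← Finset.sum_range_add_sum_Ico _ hN, Finset.sum_congr rfl hnone,
    Finset.sum_congr rfl hchild, Finset.sum_const_zero, add_zero]

theorem vY_eq_chiY_sub (ht : t.IsColoredTree) (hY : t.MinComplete Y) {N : ℕ}
    (hN : sizeOf t ≤ N) (v : List ℕ) :
    vY t Y v = chiY t Y v - ∑ i ∈ Finset.range N, chiY t Y (v ++ [i]) := by
  induction t using ind generalizing Y N v with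
  | leaf a => obtain ⟨_, h⟩ := ht.2; cases h
  | node ts ih =>
    cases v with
    | nil =>
      have hlen : ts.length ≤ N := by
        have := length_lt_sizeOf ts
        simp only [node.sizeOf_spec] at hN
        omega
      simp only [List.nil_append]
      rw [vY_node_nil, chiY_nil ht.nil_mem_uncS hY.nil_notMem, sum_chiY_singleton ht hY hlen]
    | cons j q =>
      by_cases hj : ts[j]? = none ∨ [j] ∈ Y
      · have hzero : ∀ r, chiY (node ts) Y (j :: r) = 0 := fun r => by
          rcases hj with hj | hj
          · exact chiY_eq_zero_of_notMem_uncS (notMem_uncS_node_cons hj r)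
          · exact chiY_eq_zero_of_prefix hj (List.cons_prefix_cons.2 ⟨rfl, List.nil_prefix⟩)
        simp [vY_node_cons_eq_zero hj, hzero]
      · push Not at hj
        obtain ⟨c, hc⟩ := Option.ne_none_iff_exists'.1 hj.1
        rw [vY_node_cons hc hj.2, ih c (List.mem_of_getElem? hc) (ht.child hY hc hj.2)
          (hY.sect hc hj.2) ((sizeOf_lt_of_getElem? hc).le.trans hN) q]
        simp only [List.cons_append, chiY_node_cons hY.nil_notMem hc]

end VY

section VYReal

variable {t : CTree α} {Y : Finset (List ℕ)}

theorem chiY_dropLast_sub_chiY (ht : t.IsColoredTree) (hY : t.MinComplete Y) {d : List ℕ}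
    (hd : d ∈ edgeS t) : chiY t Y d.dropLast - chiY t Y d = if d ∈ Y then 1 else 0 := by
  have hdl := dropLast_mem_uncS hd
  have hd0 := (mem_edgeS.1 hd).1
  by_cases hdY : d ∈ Y
  · have : chiY t Y d.dropLast = 1 := by
      refine if_pos ⟨hdl, fun e he hed => ?_⟩
      have hed' := hed.trans (List.dropLast_prefix d)
      obtain rfl := hY.eq_of_prefix ht hdY he hed'
      have := hed.length_le
      have := List.length_pos_iff.2 hd0
      simp only [List.length_dropLast] at *
      omega
    rw [this, chiY_eq_zero_of_prefix hdY (List.prefix_refl d), if_pos hdY, sub_zero]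
  · have hfree : (∀ e ∈ Y, ¬ e <+: d.dropLast) → ∀ e ∈ Y, ¬ e <+: d := fun h e he hed =>
      h e he (hed.prefix_dropLast fun h => hdY (h ▸ he))
    rw [if_neg hdY, sub_eq_zero]
    refine if_congr ⟨fun ⟨_, h⟩ => ⟨?_, hfree h⟩, fun ⟨_, h⟩ => ⟨hdl, fun e he hed =>
      h e he (hed.trans (List.dropLast_prefix d))⟩⟩ rfl rfl
    refine (mem_vertS_iff.1 (mem_edgeS.1 hd).2).resolve_right fun hdc => ?_
    obtain ⟨e, ⟨he, hed⟩, -⟩ := hY.2 d hdc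
    exact hfree h e he hed

def vYReal (t : CTree α) (Y : Finset (List ℕ)) : List ℕ → ℝ := fun p => (vY t Y p : ℝ)

theorem vYReal_eq (ht : t.IsColoredTree) (hY : t.MinComplete Y) :
    vYReal t Y = fun v => (chiY t Y v : ℝ) -
      ∑ i ∈ Finset.range (sizeOf t), (chiY t Y (v ++ [i]) : ℝ) := by
  funext v
  simp [vYReal, vY_eq_chiY_sub ht hY le_rfl v]

theorem vYReal_eq_zero_of_notMem_uncS (ht : t.IsColoredTree) (hY : t.MinComplete Y)
    {p : List ℕ} (hp : p ∉ uncS t) : vYReal t Y p = 0 := by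
  have hchild (i : ℕ) : p ++ [i] ∉ uncS t :=
    fun h => hp (mem_uncS_of_prefix (List.prefix_append p [i]) h)
  simp [vYReal_eq ht hY, chiY_eq_zero_of_notMem_uncS hp, chiY_eq_zero_of_notMem_uncS (hchild _)]

theorem descSum_vYReal (ht : t.IsColoredTree) (hY : t.MinComplete Y) (v : List ℕ) :
    descSum t v (vYReal t Y) = chiY t Y v := by
  by_cases hv : v ∈ uncS t
  · rw [vYReal_eq ht hY]
    exact descSum_sub_sum_children (fun p hp => by simp [chiY_eq_zero_of_notMem_uncS hp])
      le_rfl hv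
  · simp [descSum_eq_zero_of_notMem_uncS hv, chiY_eq_zero_of_notMem_uncS hv]

theorem pairR_wt_vYReal (ht : t.IsColoredTree) (hY : t.MinComplete Y) {d : List ℕ}
    (hd : d ∈ edgeS t) : pairR t (wt t d) (vYReal t Y) = if d ∈ Y then 1 else 0 := by
  rw [pairR_wt, descSum_vYReal ht hY, descSum_vYReal ht hY, ← Int.cast_sub,
    chiY_dropLast_sub_chiY ht hY hd]
  split_ifs <;> simp

theorem vYReal_mem_dualCone (ht : t.IsColoredTree) (hY : t.MinComplete Y) :
    vYReal t Y ∈ dualCone t :=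
  ⟨fun _ hp => vYReal_eq_zero_of_notMem_uncS ht hY hp, fun d hd => by
    rw [pairR_wt_vYReal ht hY hd]; split_ifs <;> norm_num⟩

theorem descSum_nil_vYReal (ht : t.IsColoredTree) (hY : t.MinComplete Y) :
    descSum t [] (vYReal t Y) = 1 := by
  rw [descSum_vYReal ht hY, chiY_nil ht.nil_mem_uncS hY.nil_notMem, Int.cast_one]

theorem vYReal_ne_zero (ht : t.IsColoredTree) (hY : t.MinComplete Y) : vYReal t Y ≠ 0 :=
  fun h => by simpa [h] using descSum_nil_vYReal ht hY

end VYReal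

section Faces

theorem mem_ray_self (v : List ℕ → ℝ) : v ∈ ray v :=
  ⟨1, zero_le_one, (one_smul ℝ v).symm⟩

theorem ray_smul {a : ℝ} (ha : 0 < a) (v : List ℕ → ℝ) : ray (a • v) = ray v := by
  ext x
  constructor
  · rintro ⟨c, hc, rfl⟩
    exact ⟨c * a, mul_nonneg hc ha.le, smul_smul c a v⟩
  · rintro ⟨c, hc, rfl⟩
    exact ⟨c / a, div_nonneg hc ha.le, by rw [smul_smul, div_mul_cancel₀ c ha.ne']⟩

variable {t : CTree α} {Y : Finset (List ℕ)}

theorem descSum_eq_mul_chiY (ht : t.IsColoredTree) (hY : t.MinComplete Y) {x : List ℕ → ℝ}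
    (hgap : ∀ d ∈ edgeS t, d ∉ Y → pairR t (wt t d) x = 0) {v : List ℕ} (hv : v ∈ uncS t) :
    descSum t v x = descSum t [] x * chiY t Y v := by
  have hvV := mem_vertS_of_mem_uncS hv
  by_cases habove : ∀ d ∈ Y, ¬ d <+: v
  · have hpath := descSum_sub_descSum_of_prefix t x (List.nil_prefix (l := v))
    rw [Finset.sum_eq_zero fun m hm => hgap _ (take_succ_mem_edgeS hvV (Finset.mem_Ico.1 hm).2)
      fun h => habove _ h (List.take_prefix _ v)] at hpath
    rw [show chiY t Y v = 1 from if_pos ⟨hv, habove⟩, Int.cast_one, mul_one]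
    linarith
  · push Not at habove
    obtain ⟨d, hd, hdv⟩ := habove
    obtain ⟨c, hc, hvc⟩ := ht.exists_mem_colS hvV
    have hpath := descSum_sub_descSum_of_prefix t x hvc
    rw [Finset.sum_eq_zero fun m hm => ?_, descSum_eq_zero_of_notMem_uncS
      (notMem_uncS_of_mem_colS hc)] at hpath
    · rw [chiY_eq_zero_of_prefix hd hdv, Int.cast_zero, mul_zero]
      linarith
    obtain ⟨hvm, hmc⟩ := Finset.mem_Ico.1 hm
    refine hgap _ (take_succ_mem_edgeS (mem_vertS_of_mem_colS hc) hmc) fun he => ?_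
    have := congrArg List.length
      ((hY.2 c hc).unique ⟨he, List.take_prefix _ c⟩ ⟨hd, hdv.trans hvc⟩)
    have := hdv.length_le
    simp only [List.length_take] at *
    omega

theorem eq_smul_vYReal (ht : t.IsColoredTree) (hY : t.MinComplete Y) {x : List ℕ → ℝ}
    (hx : ∀ p ∉ uncS t, x p = 0) (hgap : ∀ d ∈ edgeS t, d ∉ Y → pairR t (wt t d) x = 0) :
    x = descSum t [] x • vYReal t Y := by
  refine sub_eq_zero.1 (eq_zero_of_descSum_eq_zero (t := t) (fun p hp => ?_) fun v hv => ?_)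
  · simp [hx p hp, vYReal_eq_zero_of_notMem_uncS ht hY hp]
  · rw [map_sub, map_smul, descSum_eq_mul_chiY ht hY hgap hv, descSum_vYReal ht hY, smul_eq_mul,
      sub_self]

theorem isOneDimFace_ray_vYReal (ht : t.IsColoredTree) (hY : t.MinComplete Y) :
    IsOneDimFace (dualCone t) (ray (vYReal t Y)) := by
  refine ⟨?_, ⟨_, vYReal_ne_zero ht hY, rfl⟩, fun x hx y hy hxy => ?_⟩
  · rintro _ ⟨c, hc, rfl⟩
    exact smul_mem_dualCone hc (vYReal_mem_dualCone ht hY)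
  obtain ⟨c, -, hc⟩ := hxy
  have hgap : ∀ d ∈ edgeS t, d ∉ Y → pairR t (wt t d) x = 0 ∧ pairR t (wt t d) y = 0 := by
    intro d hd hdY
    have h := congrArg (pairR t (wt t d)) hc
    rw [pairR_add, pairR_smul, pairR_wt_vYReal ht hY hd, if_neg hdY, mul_zero] at h
    have := hx.2 d hd
    have := hy.2 d hd
    constructor <;> linarith
  have hroot := mem_vertS_of_mem_uncS ht.nil_mem_uncS
  exact ⟨⟨_, ht.descSum_nonneg hx hroot, eq_smul_vYReal ht hY hx.1 fun d hd h => (hgap d hd h).1⟩,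
    ⟨_, ht.descSum_nonneg hy hroot, eq_smul_vYReal ht hY hy.1 fun d hd h => (hgap d hd h).2⟩⟩

theorem eq_of_ray_vYReal_eq (ht : t.IsColoredTree) {Y₁ Y₂ : Finset (List ℕ)}
    (h₁ : t.MinComplete Y₁) (h₂ : t.MinComplete Y₂)
    (h : ray (vYReal t Y₁) = ray (vYReal t Y₂)) : Y₁ = Y₂ := by
  obtain ⟨c, -, hc⟩ : vYReal t Y₁ ∈ ray (vYReal t Y₂) := h ▸ mem_ray_self _
  have hc1 : 1 = c := by
    simpa [descSum_nil_vYReal ht h₁, descSum_nil_vYReal ht h₂] using congrArg (descSum t []) hc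
  subst hc1
  rw [one_smul] at hc
  have key : ∀ d ∈ edgeS t, (d ∈ Y₁ ↔ d ∈ Y₂) := by
    intro d hd
    have := congrArg (pairR t (wt t d)) hc
    rw [pairR_wt_vYReal ht h₁ hd, pairR_wt_vYReal ht h₂ hd] at this
    split_ifs at this <;> simp_all
  ext d
  exact ⟨fun h => (key d (h₁.1 h)).1 h, fun h => (key d (h₂.1 h)).2 h⟩

def posSet (t : CTree α) (x : List ℕ → ℝ) : Set (List ℕ) :=
  {u | u ∈ uncS t ∧ 0 < descSum t u x}

theorem prefix_mem_posSet {x : List ℕ → ℝ} (hx : x ∈ dualCone t) {u : List ℕ}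
    (hu : u ∈ posSet t x) {q : List ℕ} (hq : q <+: u) : q ∈ posSet t x :=
  ⟨mem_uncS_of_prefix hq hu.1,
    hu.2.trans_le (descSum_le_of_prefix hx (mem_vertS_of_mem_uncS hu.1) hq)⟩

theorem nil_mem_posSet (ht : t.IsColoredTree) {x : List ℕ → ℝ} (hx : x ∈ dualCone t)
    (hx0 : x ≠ 0) : [] ∈ posSet t x := by
  have hroot := mem_vertS_of_mem_uncS ht.nil_mem_uncS
  refine ⟨ht.nil_mem_uncS, lt_of_le_of_ne (ht.descSum_nonneg hx hroot) fun h => hx0 ?_⟩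
  refine eq_zero_of_descSum_eq_zero hx.1 fun u hu => le_antisymm ?_
    (ht.descSum_nonneg hx (mem_vertS_of_mem_uncS hu))
  exact h ▸ descSum_le_of_prefix hx (mem_vertS_of_mem_uncS hu) List.nil_prefix

theorem minComplete_exitEdges_posSet (ht : t.IsColoredTree) {x : List ℕ → ℝ}
    (hx : x ∈ dualCone t) (hx0 : x ≠ 0) : t.MinComplete (exitEdges t (posSet t x)) :=
  minComplete_exitEdges (fun _ hu _ hq => prefix_mem_posSet hx hu hq) (nil_mem_posSet ht hx hx0)
    fun _ hu => hu.1

theorem pairR_wt_pos_of_mem_exitEdges_posSet {x : List ℕ → ℝ} {d : List ℕ}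
    (hd : d ∈ exitEdges t (posSet t x)) : 0 < pairR t (wt t d) x := by
  obtain ⟨-, hdl, hdD⟩ := Finset.mem_filter.1 hd
  have : descSum t d x ≤ 0 := by
    by_cases hdu : d ∈ uncS t
    · exact not_lt.1 fun h => hdD ⟨hdu, h⟩
    · rw [descSum_eq_zero_of_notMem_uncS hdu]
  rw [pairR_wt]
  linarith [hdl.2]

theorem sub_smul_vYReal_mem_dualCone (ht : t.IsColoredTree) (hY : t.MinComplete Y)
    {x : List ℕ → ℝ} (hx : x ∈ dualCone t) {c : ℝ} (hc : ∀ d ∈ Y, c ≤ pairR t (wt t d) x) :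
    x - c • vYReal t Y ∈ dualCone t := by
  refine ⟨fun p hp => ?_, fun d hd => ?_⟩
  · simp [hx.1 p hp, vYReal_eq_zero_of_notMem_uncS ht hY hp]
  rw [pairR_sub, pairR_smul, pairR_wt_vYReal ht hY hd]
  split_ifs with hdY
  · linarith [hc d hdY]
  · simpa using hx.2 d hd

theorem exists_minComplete_ray_vYReal_eq (ht : t.IsColoredTree) {F : Set (List ℕ → ℝ)}
    (hF : IsOneDimFace (dualCone t) F) : ∃ Y, t.MinComplete Y ∧ ray (vYReal t Y) = F := by
  obtain ⟨hFC, ⟨v, hv0, rfl⟩, hext⟩ := hF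
  have hvC : v ∈ dualCone t := hFC (mem_ray_self v)
  set Y := exitEdges t (posSet t v)
  have hY : t.MinComplete Y := minComplete_exitEdges_posSet ht hvC hv0
  obtain ⟨d₀, hd₀, hmin⟩ := Y.exists_min_image (fun d => pairR t (wt t d) v) (hY.nonempty ht)
  have hc : 0 < pairR t (wt t d₀) v := pairR_wt_pos_of_mem_exitEdges_posSet hd₀
  obtain ⟨b, hb, hcb⟩ := (hext _ (smul_mem_dualCone hc.le (vYReal_mem_dualCone ht hY)) _
    (sub_smul_vYReal_mem_dualCone ht hY hvC hmin)
    (by rw [add_sub_cancel]; exact mem_ray_self v)).1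
  have hb0 : 0 < b := by
    refine lt_of_le_of_ne hb fun h => smul_ne_zero hc.ne' (vYReal_ne_zero ht hY) ?_
    rw [hcb, ← h, zero_smul]
  exact ⟨Y, hY, by rw [← ray_smul hc, hcb, ray_smul hb0]⟩

end Faces

end CTree

/-- For every minimally complete `Y ⊆ E(Γ)` the vector `v_Y` lies in
`C(Γ)` and spans a one-dimensional face of `C(Γ)`; moreover `Y ↦ ℝ_{≥0}·v_Y` is a
bijection from the minimally complete subsets onto the one-dimensional faces of
`C(Γ)`. -/
theorem vY_spans_oneDimFace_and_bijection {α : Type} (t : CTree α)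
    (ht : t.IsColoredTree) :
    (∀ Y : Finset (List ℕ), t.MinComplete Y →
      (fun p => ((CTree.vY t Y p : ℤ) : ℝ)) ∈ CTree.dualCone t ∧
      CTree.IsOneDimFace (CTree.dualCone t)
        (CTree.ray (fun p => ((CTree.vY t Y p : ℤ) : ℝ)))) ∧
    Set.BijOn (fun Y : Finset (List ℕ) => CTree.ray (fun p => ((CTree.vY t Y p : ℤ) : ℝ)))
      {Y | t.MinComplete Y} {F | CTree.IsOneDimFace (CTree.dualCone t) F} :=
  ⟨fun _ hY => ⟨CTree.vYReal_mem_dualCone ht hY, CTree.isOneDimFace_ray_vYReal ht hY⟩,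
    fun _ hY => CTree.isOneDimFace_ray_vYReal ht hY,
    fun _ h₁ _ h₂ h => CTree.eq_of_ray_vYReal_eq ht h₁ h₂ h,
    fun _ hF => CTree.exists_minComplete_ray_vYReal_eq ht hF⟩
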